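/- arXiv:math/9501204 — 3 statements merged into one kernel-verified Lean document; each statement's English description precedes it below -/
import Mathlib

section
/- If B is a natural member of 𝕊(m,n) and W ⊆ B is a dense G_δ relative to B, then W ∈ 𝕊(m,n); that is, W also admits a witnessing family of open balls as in the definition of 𝕊(m,n). -/
open Set

noncomputable section

abbrev Euc (m : ℕ) := EuclideanSpace ℝ (Fin m)

/-- Angle between the lines spanned by `v` and `w`. -/
noncomputable def lineAngle {E : Type*} [NormedAddCommGroup E] [InnerProductSpace ℝ E]
    (v w : E) : ℝ :=
  min (InnerProductGeometry.angle v w) (InnerProductGeometry.angle v (-w))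

/-- Angular distance from the line spanned by `v` to the subspace `V`. -/
noncomputable def angleToSub {E : Type*} [NormedAddCommGroup E] [InnerProductSpace ℝ E]
    (v : E) (V : Submodule ℝ E) : ℝ :=
  sInf (lineAngle v '' {w : E | w ∈ V ∧ w ≠ 0})

/-- `V` is a `k`-dimensional tangent plane to `A` at `b`. -/
def IsTangentPlane {E : Type*} [NormedAddCommGroup E] [InnerProductSpace ℝ E]
    (k : ℕ) (A : Set E) (b : E) (V : Submodule ℝ E) : Prop :=
  Module.finrank ℝ V ≤ k ∧
    ∀ ε > (0:ℝ), ∃ δ > (0:ℝ), ∀ a ∈ A, 0 < ‖a - b‖ → ‖a - b‖ < δ → angleToSub (a - b) V < ε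

/-- `A` is a `k`-smooth surface. -/
def IsSmoothSurface {E : Type*} [NormedAddCommGroup E] [InnerProductSpace ℝ E]
    (k : ℕ) (A : Set E) : Prop :=
  ∀ b ∈ A, ∃ V, IsTangentPlane k A b V

/-- `ε`-orthogonality of an indexed family `{x_i}_{i=0}^n`. -/
def EpsOrthogonal {E : Type*} [NormedAddCommGroup E] [InnerProductSpace ℝ E]
    (ε : ℝ) {n : ℕ} (x : Fin (n + 1) → E) : Prop :=
  ∀ i j : Fin (n + 1), i ≠ 0 → j ≠ 0 → i ≠ j →
    |lineAngle (x i - x 0) (x j - x 0) - Real.pi / 2| < ε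

/-- `ε` has the separation property of the constant `ε(m)`. -/
def SepConst (m : ℕ) (ε : ℝ) : Prop :=
  0 < ε ∧ ∀ (n : ℕ) (x : Fin (n + 1) → Euc m) (V : Submodule ℝ (Euc m)),
    EpsOrthogonal ε x → Module.finrank ℝ V < n →
      ∃ i : Fin (n + 1), i ≠ 0 ∧ ε < angleToSub (x i - x 0) V

/-- `C` is a witness that `B ∈ 𝕊(m,n)` (with orthogonality constant `ε`). -/
def SacksWitness (m n : ℕ) (ε : ℝ) (C : List (Fin (n + 1)) → Set (Euc m))
    (B : Set (Euc m)) : Prop :=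
  (∀ ξ, ∃ c r, 0 < r ∧ (ξ ≠ [] → r < 1 / (ξ.length : ℝ)) ∧ C ξ = Metric.ball c r) ∧
  (⋂ i : ℕ, ⋃ ξ ∈ {l : List (Fin (n + 1)) | l.length = i}, closure (C ξ)) ⊆ B ∧
  (∀ ξ ξ', ξ.length = ξ'.length → ξ ≠ ξ' → closure (C ξ) ∩ closure (C ξ') = ∅) ∧
  (∀ ξ ξ' : List (Fin (n + 1)), ξ' <+: ξ → ξ' ≠ ξ → closure (C ξ) ⊆ C ξ') ∧
  (∀ ξ (x : Fin (n + 1) → Euc m), (∀ k, x k ∈ C (ξ ++ [k])) → EpsOrthogonal ε x)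

/-- Membership in the forcing `𝕊(m,n)`. -/
def InSacks (m n : ℕ) (ε : ℝ) (B : Set (Euc m)) : Prop :=
  MeasurableSet B ∧ ∃ C, SacksWitness m n ε C B

/-- `B` is a natural member of `𝕊(m,n)`. -/
def NaturalSacks (m n : ℕ) (ε : ℝ) (B : Set (Euc m)) : Prop :=
  ∃ C, SacksWitness m n ε C B ∧
    B = ⋂ i : ℕ, ⋃ ξ ∈ {l : List (Fin (n + 1)) | l.length = i}, C ξ

/-- A discrete subset of `ℝ^m`. -/
def DiscreteSet {m : ℕ} (S : Set (Euc m)) : Prop :=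
  ∀ x ∈ S, ∃ U, IsOpen U ∧ U ∩ S = {x}

/-- Membership in the σ-ideal `𝒟_{m,k}` (generated by discrete sets when `k = 0`). -/
def InIdeal (m k : ℕ) (S : Set (Euc m)) : Prop :=
  ∃ T : ℕ → Set (Euc m),
    (∀ j, if k = 0 then DiscreteSet (T j) else IsSmoothSurface k (T j)) ∧ S ⊆ ⋃ j, T j

/-- The covering number `𝔡_{m,k}` of the σ-ideal `𝒟_{m,k}`. -/
def covIdeal (m k : ℕ) : Cardinal :=
  sInf {κ | ∃ (ι : Type) (S : ι → Set (Euc m)), Cardinal.mk ι = κ ∧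
    (∀ i, InIdeal m k (S i)) ∧ (⋃ i, S i) = Set.univ}

/-- The covering number of the meagre ideal on `ℝ^m`. -/
def covMeagre (m : ℕ) : Cardinal :=
  sInf {κ | ∃ (ι : Type) (S : ι → Set (Euc m)), Cardinal.mk ι = κ ∧
    (∀ i, IsMeagre (S i)) ∧ (⋃ i, S i) = Set.univ}

/-- `g` is differentiable on its domain `X`. -/
def DiffOnDomain (g : ℝ → ℝ) (X : Set ℝ) : Prop :=
  ∀ x ∈ X, ∃ μ : ℝ,
    Filter.Tendsto (fun t => (g t - g x) / (t - x)) (nhdsWithin x (X \ {x})) (nhds μ)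

/-- The point `(x, y)` of the Euclidean plane. -/
def pt (x y : ℝ) : Euc 2 := WithLp.toLp 2 ![x, y]

/-- `dec(𝒞,𝒟)`. -/
def decCD : Cardinal :=
  sInf {κ | ∃ ι : Type, Cardinal.mk ι = κ ∧ ∀ f : ℝ → ℝ, Continuous f →
    ∃ X : ι → Set ℝ, (⋃ i, X i) = Set.univ ∧ ∀ i, DiffOnDomain f (X i)}

/-- `cov(𝒟_{2,1})` via coverings by 1-smooth curves. -/
def cov21 : Cardinal :=
  sInf {κ | ∃ (ι : Type) (S : ι → Set (Euc 2)), Cardinal.mk ι = κ ∧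
    (∀ i, IsSmoothSurface 1 (S i)) ∧ (⋃ i, S i) = Set.univ}

/-!
`W = B ∩ ⋂ⱼ Gⱼ` with `Gⱼ` open. Since `B` is natural, every point of `B` lies in the open balls
`C ξ` along a branch, so for each node `η` a point of `W ∩ C η` (which exists by density) yields
an extension `η'` of `η` whose ball has closure inside `Gⱼ`. Fusing these extensions level by
level produces a subtree `C ∘ σ` of the witness for `B`, and every branch of it passes through
all the `Gⱼ`.
-/

open Metric Topology

section Kernel

variable {α X : Type*} [TopologicalSpace X]

def kernel (C : List α → Set X) : Set X :=
  ⋂ i : ℕ, ⋃ ξ ∈ {l : List α | l.length = i}, C ξ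

def closureKernel (C : List α → Set X) : Set X :=
  ⋂ i : ℕ, ⋃ ξ ∈ {l : List α | l.length = i}, closure (C ξ)

lemma isGδ_kernel [Countable α] {C : List α → Set X} (hC : ∀ ξ, IsOpen (C ξ)) :
    IsGδ (kernel C) :=
  .iInter_of_isOpen fun _ => isOpen_biUnion fun ξ _ => hC ξ

lemma closureKernel_subset_iInter {C : List α → Set X} {G : ℕ → Set X}
    (h : ∀ t k, closure (C (t ++ [k])) ⊆ G t.length) : closureKernel C ⊆ ⋂ j, G j := by
  intro x hx
  simp only [closureKernel, mem_iInter, mem_iUnion, mem_ofPred_eq, exists_prop] at hx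
  refine mem_iInter.mpr fun j => ?_
  obtain ⟨ξ, hlen, hxξ⟩ := hx (j + 1)
  obtain ⟨t, k, rfl⟩ := ξ.eq_nil_or_concat'.resolve_left (by rintro rfl; simp at hlen)
  have ht : t.length = j := by simpa using hlen
  exact ht ▸ h t k hxξ

end Kernel

lemma exists_isOpen_inter_eq_of_isGδ_preimage_val {X : Type*} [TopologicalSpace X]
    {B W : Set X} (hWB : W ⊆ B) (hW : IsGδ (Subtype.val ⁻¹' W : Set B)) :
    ∃ G : ℕ → Set X, (∀ j, IsOpen (G j)) ∧ W = B ∩ ⋂ j, G j := by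
  obtain ⟨V, hVopen, hVeq⟩ := hW.eq_iInter_nat
  choose G hGopen hGV using fun j => isOpen_induced_iff.mp (hVopen j)
  refine ⟨G, hGopen, ?_⟩
  rw [← inter_eq_right.mpr hWB, ← Subtype.image_preimage_coe, hVeq, ← Subtype.image_preimage_coe,
    preimage_iInter]
  simp only [hGV]

lemma nonempty_inter_of_dense_preimage_val {X : Type*} [TopologicalSpace X] {B W U : Set X}
    (hW : Dense (Subtype.val ⁻¹' W : Set B)) (hU : IsOpen U) (hUB : (U ∩ B).Nonempty) :
    (U ∩ W).Nonempty := by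
  obtain ⟨x, hxU, hxB⟩ := hUB
  obtain ⟨⟨y, _⟩, hyU, hyW⟩ :=
    hW.inter_open_nonempty _ (hU.preimage continuous_subtype_val) ⟨⟨x, hxB⟩, hxU⟩
  exact ⟨y, hyU, hyW⟩

namespace List

variable {α : Type*}

lemma exists_concat_prefix_of_ne_of_length_eq :
    ∀ {ξ ξ' : List α}, ξ.length = ξ'.length → ξ ≠ ξ' →
      ∃ ρ a b, a ≠ b ∧ ρ ++ [a] <+: ξ ∧ ρ ++ [b] <+: ξ'
  | [], [], _, hne => absurd rfl hne
  | [], _ :: _, hlen, _ | _ :: _, [], hlen, _ => by simp at hlen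
  | a :: t, b :: t', hlen, hne => by
    by_cases hab : a = b
    · subst hab
      obtain ⟨ρ, c, d, hcd, h, h'⟩ :=
        exists_concat_prefix_of_ne_of_length_eq (by simpa using hlen) (by simpa using hne)
      exact ⟨a :: ρ, c, d, hcd, by simpa using h, by simpa using h'⟩
    · exact ⟨[], a, b, hab, by simp, by simp⟩

lemma exists_concat_prefix_of_prefix_of_ne {ξ' ξ : List α} (h : ξ' <+: ξ) (hne : ξ' ≠ ξ) :
    ∃ k, ξ' ++ [k] <+: ξ := by
  obtain ⟨_ | ⟨k, r⟩, rfl⟩ := h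
  · simp at hne
  · exact ⟨k, r, by simp⟩

variable {σ : List α → List α}

lemma length_le_length_of_concat_prefix (hσ : ∀ ξ k, σ ξ ++ [k] <+: σ (ξ ++ [k]))
    (ξ : List α) : ξ.length ≤ (σ ξ).length := by
  induction ξ using List.reverseRecOn with
  | nil => simp
  | append_singleton t k ih =>
    have := (hσ t k).length_le
    simp only [length_append, length_singleton] at this ⊢
    omega

lemma prefix_of_concat_prefix (hσ : ∀ ξ k, σ ξ ++ [k] <+: σ (ξ ++ [k])) {ξ' ξ : List α}
    (h : ξ' <+: ξ) : σ ξ' <+: σ ξ := by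
  induction ξ using List.reverseRecOn with
  | nil => rw [prefix_nil.mp h]
  | append_singleton t k ih =>
    rcases prefix_concat_iff.mp h with rfl | h
    · exact prefix_rfl
    · exact (ih h).trans ((prefix_append _ _).trans (hσ t k))

end List

def fusion {α : Type*} (E : List α → ℕ → List α) (ξ : List α) : List α :=
  List.reverseRec (motive := fun _ => List α) [] (fun t k s => E (s ++ [k]) t.length) ξ

lemma fusion_concat {α : Type*} (E : List α → ℕ → List α) (ξ : List α) (k : α) :
    fusion E (ξ ++ [k]) = E (fusion E ξ ++ [k]) ξ.length := by
  simp [fusion]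

namespace SacksWitness

variable {m n : ℕ} {ε : ℝ} {C : List (Fin (n + 1)) → Set (Euc m)} {B : Set (Euc m)}
  {η η' ζ : List (Fin (n + 1))}

lemma isOpen (hC : SacksWitness m n ε C B) (ξ : List (Fin (n + 1))) : IsOpen (C ξ) := by
  obtain ⟨c, r, -, -, h⟩ := hC.1 ξ
  exact h ▸ isOpen_ball

lemma closure_subset_of_concat_prefix (hC : SacksWitness m n ε C B) {k : Fin (n + 1)}
    (h : η' ++ [k] <+: η) : closure (C η) ⊆ C η' :=
  hC.2.2.2.1 η η' ((List.prefix_append _ _).trans h) fun he => by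
    simpa [he] using h.length_le

lemma closure_subset_closure_of_prefix (hC : SacksWitness m n ε C B) (h : η' <+: η) :
    closure (C η) ⊆ closure (C η') := by
  rcases eq_or_ne η' η with rfl | hne
  · exact subset_rfl
  · exact (hC.2.2.2.1 η η' h hne).trans subset_closure

lemma subset_of_prefix (hC : SacksWitness m n ε C B) (h : η' <+: η) : C η ⊆ C η' := by
  rcases eq_or_ne η' η with rfl | hne
  · exact subset_rfl
  · exact subset_closure.trans (hC.2.2.2.1 η η' h hne)

lemma eq_of_mem_closure (hC : SacksWitness m n ε C B) {y : Euc m}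
    (hlen : η.length = ζ.length) (hη : y ∈ closure (C η)) (hζ : y ∈ closure (C ζ)) : η = ζ := by
  by_contra hne
  exact notMem_empty y (hC.2.2.1 η ζ hlen hne ▸ ⟨hη, hζ⟩)

lemma prefix_of_mem_closure (hC : SacksWitness m n ε C B) {y : Euc m}
    (hlen : η.length ≤ ζ.length) (hη : y ∈ closure (C η)) (hζ : y ∈ closure (C ζ)) : η <+: ζ := by
  have htake : η = ζ.take η.length :=
    hC.eq_of_mem_closure (by simp [hlen]) hη
      (hC.closure_subset_closure_of_prefix (List.take_prefix _ _) hζ)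
  exact htake ▸ List.take_prefix _ _

lemma closure_subset_ball (hC : SacksWitness m n ε C B) (hη : η ≠ []) {y : Euc m}
    (hy : y ∈ closure (C η)) : closure (C η) ⊆ ball y (2 / η.length) := by
  obtain ⟨c, r, -, hr, hCη⟩ := hC.1 η
  have hr := hr hη
  rw [hCη] at hy ⊢
  intro z hz
  have hz' := closure_ball_subset_closedBall hz
  have hy' := closure_ball_subset_closedBall hy
  rw [mem_closedBall] at hz' hy'
  rw [mem_ball]
  calc dist z y ≤ dist z c + dist y c := dist_triangle_right z y c
    _ < 2 / η.length := by rw [one_div] at hr; rw [div_eq_mul_inv]; linarith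

lemma nonempty_inter_closureKernel (hC : SacksWitness m n ε C B) (η : List (Fin (n + 1))) :
    (C η ∩ closureKernel C).Nonempty := by
  set K : ℕ → Set (Euc m) := fun j => closure (C (η ++ List.replicate (j + 1) 0))
  have hKanti : ∀ j, K (j + 1) ⊆ K j := fun j =>
    hC.closure_subset_closure_of_prefix (by simp [List.replicate_succ' (n := j + 1)])
  have hKne : ∀ j, (K j).Nonempty := fun j => by
    obtain ⟨c, r, hr, -, h⟩ := hC.1 (η ++ List.replicate (j + 1) 0)
    exact (h ▸ nonempty_ball.mpr hr).closure
  have hK0 : IsCompact (K 0) := by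
    obtain ⟨c, r, -, -, h⟩ := hC.1 (η ++ List.replicate 1 0)
    simp only [K, h]
    exact isBounded_ball.isCompact_closure
  obtain ⟨x, hx⟩ := hK0.nonempty_iInter_of_sequence_nonempty_isCompact_isClosed K hKanti hKne
    fun _ => isClosed_closure
  rw [mem_iInter] at hx
  refine ⟨x, hC.closure_subset_of_concat_prefix (k := 0) List.prefix_rfl (hx 0), ?_⟩
  refine mem_iInter.mpr fun i => mem_biUnion
    (show (η ++ List.replicate (i + 1) 0).take i ∈ {l : List _ | l.length = i} by simp; omega) ?_
  exact hC.closure_subset_closure_of_prefix (List.take_prefix _ _) (hx i)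

lemma exists_prefix_closure_subset (hC : SacksWitness m n ε C B) {y : Euc m} {U : Set (Euc m)}
    (hy : y ∈ kernel C) (hyη : y ∈ C η) (hU : U ∈ 𝓝 y) :
    ∃ η', η <+: η' ∧ closure (C η') ⊆ U := by
  obtain ⟨δ, hδ, hball⟩ := Metric.mem_nhds_iff.mp hU
  obtain ⟨N, hN⟩ := exists_nat_gt (2 / δ)
  set L := max N η.length + 1
  simp only [kernel, mem_iInter, mem_iUnion, mem_ofPred_eq, exists_prop] at hy
  obtain ⟨ζ, hζlen, hyζ⟩ := hy L
  have hζ : ζ ≠ [] := by rintro rfl; simp [L] at hζlen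
  have hL : 2 / (L : ℝ) ≤ δ := by
    have hNL : (N : ℝ) ≤ L := by exact_mod_cast show N ≤ L by omega
    rw [div_le_iff₀ (by positivity)]
    nlinarith [(div_lt_iff₀ hδ).mp hN]
  refine ⟨ζ, hC.prefix_of_mem_closure (by omega) (subset_closure hyη) (subset_closure hyζ), ?_⟩
  calc closure (C ζ) ⊆ ball y (2 / ζ.length) := hC.closure_subset_ball hζ (subset_closure hyζ)
    _ ⊆ U := (ball_subset_ball (hζlen ▸ hL)).trans hball

lemma closureKernel_comp_subset (hC : SacksWitness m n ε C B)
    {σ : List (Fin (n + 1)) → List (Fin (n + 1))} (hσ : ∀ ξ k, σ ξ ++ [k] <+: σ (ξ ++ [k])) :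
    closureKernel (C ∘ σ) ⊆ closureKernel C := by
  simp only [closureKernel, subset_def, mem_iInter, mem_iUnion, mem_ofPred_eq, exists_prop,
    Function.comp_apply]
  rintro x hx i
  obtain ⟨ξ, rfl, hxξ⟩ := hx i
  refine ⟨(σ ξ).take ξ.length, by simp [List.length_le_length_of_concat_prefix hσ], ?_⟩
  exact hC.closure_subset_closure_of_prefix (List.take_prefix _ _) hxξ

lemma comp (hC : SacksWitness m n ε C B) {σ : List (Fin (n + 1)) → List (Fin (n + 1))}
    (hσ : ∀ ξ k, σ ξ ++ [k] <+: σ (ξ ++ [k])) {W : Set (Euc m)}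
    (hW : closureKernel (C ∘ σ) ⊆ W) : SacksWitness m n ε (C ∘ σ) W := by
  have hchild : ∀ {ξ' ξ} {k : Fin (n + 1)}, ξ' ++ [k] <+: ξ → σ ξ' ++ [k] <+: σ ξ :=
    fun h => (hσ _ _).trans (List.prefix_of_concat_prefix hσ h)
  refine ⟨fun ξ => ?_, hW, fun ξ ξ' hlen hne => ?_, fun ξ ξ' hpre hne => ?_, fun ξ x hx => ?_⟩
  · obtain ⟨c, r, hr, hr1, hCξ⟩ := hC.1 (σ ξ)
    have hle := List.length_le_length_of_concat_prefix hσ ξ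
    refine ⟨c, r, hr, fun hξ => (hr1 ?_).trans_le ?_, hCξ⟩
    · exact List.ne_nil_of_length_pos ((List.length_pos_iff.mpr hξ).trans_le hle)
    · exact one_div_le_one_div_of_le (by simpa [List.length_pos_iff]) (by exact_mod_cast hle)
  · obtain ⟨ρ, a, b, hab, ha, hb⟩ := List.exists_concat_prefix_of_ne_of_length_eq hlen hne
    refine subset_eq_empty (inter_subset_inter ?_ ?_) (hC.2.2.1 (σ ρ ++ [a]) (σ ρ ++ [b])
      (by simp) (by simpa using hab))
    · exact hC.closure_subset_closure_of_prefix (hchild ha)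
    · exact hC.closure_subset_closure_of_prefix (hchild hb)
  · obtain ⟨k, hk⟩ := List.exists_concat_prefix_of_prefix_of_ne hpre hne
    exact hC.closure_subset_of_concat_prefix (hchild hk)
  · exact hC.2.2.2.2 (σ ξ) x fun k => hC.subset_of_prefix (hσ ξ k) (hx k)

end SacksWitness

theorem dense_Gdelta_in_natural_general {m n : ℕ} (ε : ℝ)
    (B W : Set (Euc m)) (hB : NaturalSacks m n ε B) (hWB : W ⊆ B)
    (hGd : IsGδ (Subtype.val ⁻¹' W : Set B)) (hdense : Dense (Subtype.val ⁻¹' W : Set B)) :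
    InSacks m n ε W := by
  obtain ⟨C, hC, rfl⟩ := hB
  obtain ⟨G, hGopen, rfl⟩ := exists_isOpen_inter_eq_of_isGδ_preimage_val hWB hGd
  have hext : ∀ η j, ∃ η', η <+: η' ∧ closure (C η') ⊆ G j := fun η j => by
    obtain ⟨y, hyη, hyB, hyG⟩ := nonempty_inter_of_dense_preimage_val hdense (hC.isOpen η)
      ((hC.nonempty_inter_closureKernel η).mono (inter_subset_inter_right _ hC.2.1))
    exact hC.exists_prefix_closure_subset hyB hyη ((hGopen j).mem_nhds (mem_iInter.mp hyG j))
  choose E hEpre hEG using hext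
  have hσ : ∀ ξ k, fusion E ξ ++ [k] <+: fusion E (ξ ++ [k]) := fun ξ k =>
    fusion_concat E ξ k ▸ hEpre _ _
  refine ⟨((isGδ_kernel hC.isOpen).inter (.iInter_of_isOpen hGopen)).measurableSet,
    C ∘ fusion E, hC.comp hσ (subset_inter ((hC.closureKernel_comp_subset hσ).trans hC.2.1) ?_)⟩
  exact closureKernel_subset_iInter fun t k => by
    simpa only [Function.comp_apply, fusion_concat] using hEG _ _

theorem dense_Gdelta_in_natural {m n : ℕ} (ε : ℝ) (hε : SepConst m ε)
    (B W : Set (Euc m)) (hB : NaturalSacks m n ε B) (hWB : W ⊆ B)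
    (hGd : IsGδ (Subtype.val ⁻¹' W : Set B)) (hdense : Dense (Subtype.val ⁻¹' W : Set B)) :
    InSacks m n ε W :=
  dense_Gdelta_in_natural_general ε B W hB hWB hGd hdense

end
end

section
/- Let f : ℝ → ℝ be continuous and let S ⊆ ℝ² be a 1-smooth curve. Suppose x is a point such that (x, f(x)) ∈ S and the tangent line to S at (x, f(x)) has finite slope μ. Then the restriction of f to X = {t ∈ ℝ : (t, f(t)) ∈ S} is differentiable at x with derivative μ, i.e., lim_{t→x, t∈X, t≠x} (f(t) − f(x))/(t − x) = μ. -/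
open Set

noncomputable section

/-! The tangent condition says that the angle between the chord `(t - x, f t - f x)` and `(1, μ)`
tends to `0` (continuity of `f` makes the chords short as `t → x`). Since
`|det (u, v)| ≤ ∠(u, v) ‖u‖ ‖v‖`, the deviation `f t - f x - μ (t - x)` is `o` of the chord length.
Writing the chord as `(t - x) • (1, μ) + (f t - f x - μ (t - x)) • (0, 1)` shows that the chord
length is `O(t - x)`, so the deviation is `o(t - x)`, which is the claimed limit. -/

open Filter Topology Asymptotics InnerProductGeometry

section LineAngle

variable {E : Type*} [NormedAddCommGroup E] [InnerProductSpace ℝ E]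

lemma lineAngle_nonneg (u v : E) : 0 ≤ lineAngle u v :=
  le_min (angle_nonneg u v) (angle_nonneg u (-v))

lemma lineAngle_smul_right (u v : E) {c : ℝ} (hc : c ≠ 0) :
    lineAngle u (c • v) = lineAngle u v := by
  unfold lineAngle
  rcases hc.lt_or_gt with h | h
  · rw [angle_smul_right_of_neg u v h, ← smul_neg, angle_smul_right_of_neg u (-v) h, neg_neg,
      min_comm]
  · rw [angle_smul_right_of_pos u v h, ← smul_neg, angle_smul_right_of_pos u (-v) h]

lemma angleToSub_nonneg (u : E) (V : Submodule ℝ E) : 0 ≤ angleToSub u V :=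
  Real.sInf_nonneg <| by rintro _ ⟨w, -, rfl⟩; exact lineAngle_nonneg u w

lemma angleToSub_span_singleton (u : E) {v : E} (hv : v ≠ 0) :
    angleToSub u (Submodule.span ℝ {v}) = lineAngle u v := by
  have h : lineAngle u '' {w | w ∈ Submodule.span ℝ {v} ∧ w ≠ 0} = {lineAngle u v} := by
    refine Subset.antisymm ?_ ?_
    · rintro _ ⟨w, ⟨hw, hw0⟩, rfl⟩
      obtain ⟨c, rfl⟩ := Submodule.mem_span_singleton.mp hw
      rw [mem_singleton_iff, lineAngle_smul_right u v (left_ne_zero_of_smul hw0)]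
    · rintro _ rfl
      exact ⟨v, ⟨Submodule.mem_span_singleton_self v, hv⟩, rfl⟩
  rw [angleToSub, h, csInf_singleton]

lemma sin_angle_le_lineAngle (u v : E) : Real.sin (angle u v) ≤ lineAngle u v := by
  refine le_min (Real.sin_le (angle_nonneg u v)) ?_
  calc Real.sin (angle u v) = Real.sin (angle u (-v)) := by
        rw [angle_neg_right, Real.sin_pi_sub]
    _ ≤ angle u (-v) := Real.sin_le (angle_nonneg u (-v))

lemma IsTangentPlane.tendsto_angleToSub {k : ℕ} {A : Set E} {b : E} {V : Submodule ℝ E}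
    (h : IsTangentPlane k A b V) :
    Tendsto (fun a => angleToSub (a - b) V) (𝓝[A \ {b}] b) (𝓝 0) := by
  rw [Metric.tendsto_nhdsWithin_nhds]
  intro ε hε
  obtain ⟨δ, hδ, hA⟩ := h.2 ε hε
  refine ⟨δ, hδ, fun a ⟨haA, hab⟩ hdist => ?_⟩
  rw [Real.dist_eq, sub_zero, abs_of_nonneg (angleToSub_nonneg _ _)]
  exact hA a haA (norm_pos_iff.2 (sub_ne_zero.2 hab)) (by rwa [← dist_eq_norm])

end LineAngle

lemma abs_det_le_lineAngle_mul (u v : Euc 2) :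
    |u 0 * v 1 - u 1 * v 0| ≤ lineAngle u v * (‖u‖ * ‖v‖) := by
  have hinner : ∀ a b : Euc 2, inner ℝ a b = a 0 * b 0 + a 1 * b 1 := by
    intro a b; simp [PiLp.inner_apply, Fin.sum_univ_two, mul_comm]
  have hsin := sin_angle_mul_norm_mul_norm u v
  rw [hinner, hinner, hinner, show ∀ p q r s : ℝ, (p * p + q * q) * (r * r + s * s) -
    (p * r + q * s) * (p * r + q * s) = (p * s - q * r) ^ 2 by intros; ring,
    Real.sqrt_sq_eq_abs] at hsin
  rw [← hsin]
  gcongr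
  exact sin_angle_le_lineAngle u v

lemma IsTangentPlane.isLittleO_det {k : ℕ} {A : Set (Euc 2)} {b v : Euc 2}
    (h : IsTangentPlane k A b (Submodule.span ℝ {v})) (hv : v ≠ 0) :
    (fun a => (a - b) 0 * v 1 - (a - b) 1 * v 0) =o[𝓝[A \ {b}] b] fun a => a - b := by
  have hθ : Tendsto (fun a => lineAngle (a - b) v) (𝓝[A \ {b}] b) (𝓝 0) := by
    simpa only [angleToSub_span_singleton _ hv] using h.tendsto_angleToSub
  have hv' : 0 < ‖v‖ := norm_pos_iff.2 hv
  refine isLittleO_iff.2 fun c hc => ?_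
  filter_upwards [hθ.eventually (gt_mem_nhds (div_pos hc hv'))] with a ha
  calc ‖(a - b) 0 * v 1 - (a - b) 1 * v 0‖
      ≤ lineAngle (a - b) v * (‖a - b‖ * ‖v‖) := abs_det_le_lineAngle_mul _ _
    _ = (lineAngle (a - b) v * ‖v‖) * ‖a - b‖ := by ring
    _ ≤ c * ‖a - b‖ := by
        gcongr
        exact ((lt_div_iff₀ hv').1 ha).le

@[simp] lemma pt_apply_zero (a b : ℝ) : pt a b 0 = a := rfl

@[simp] lemma pt_apply_one (a b : ℝ) : pt a b 1 = b := rfl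

lemma pt_sub_pt (a b c d : ℝ) : pt a b - pt c d = pt (a - c) (b - d) := by
  ext i; fin_cases i <;> rfl

lemma pt_eq_smul_add_smul (a b μ : ℝ) : pt a b = a • pt 1 μ + (b - μ * a) • pt 0 1 := by
  ext i; fin_cases i <;> simp [pt, mul_comm]

lemma pt_ne_zero_of_left_ne_zero {a : ℝ} (ha : a ≠ 0) (b : ℝ) : pt a b ≠ 0 := by
  intro h; exact ha (by simpa using congrArg (· 0) h)

lemma tendsto_pt_graph_nhdsWithin {f : ℝ → ℝ} {x : ℝ} (hf : ContinuousAt f x) (S : Set (Euc 2)) :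
    Tendsto (fun t => pt t (f t)) (𝓝[{t | pt t (f t) ∈ S} \ {x}] x)
      (𝓝[S \ {pt x (f x)}] (pt x (f x))) := by
  refine tendsto_nhdsWithin_iff.2 ⟨?_, eventually_nhdsWithin_of_forall fun t ⟨htS, htx⟩ => ?_⟩
  · have : ContinuousAt (fun t => pt t (f t)) x := by unfold pt; fun_prop
    exact this.tendsto.mono_left nhdsWithin_le_nhds
  · refine ⟨htS, fun h => htx ?_⟩
    simpa using congrArg (· 0) h

lemma isLittleO_of_isLittleO_pt {α : Type*} {l : Filter α} {a b : α → ℝ} {μ : ℝ}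
    (h : (fun t => b t - μ * a t) =o[l] fun t => pt (a t) (b t)) :
    (fun t => b t - μ * a t) =o[l] a := by
  have hsmul : (fun t => (b t - μ * a t) • pt 0 1) =o[l] fun t => pt (a t) (b t) :=
    (IsBigO.of_bound ‖pt 0 1‖ (Eventually.of_forall fun t => by
      rw [norm_smul, mul_comm])).trans_isLittleO h
  have hsplit : (fun t => pt (a t) (b t) - (b t - μ * a t) • pt 0 1) =
      fun t => a t • pt 1 μ := funext fun t => by
    rw [pt_eq_smul_add_smul (a t) (b t) μ, add_sub_cancel_right]
  have hpt : (fun t => pt (a t) (b t)) =O[l] a :=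
    calc (fun t => pt (a t) (b t)) =O[l] fun t => a t • pt 1 μ :=
          hsplit ▸ hsmul.right_isBigO_sub
      _ =O[l] a := IsBigO.of_bound ‖pt 1 μ‖ (Eventually.of_forall fun t => by
          rw [norm_smul, mul_comm])
  exact h.trans_isBigO hpt

lemma tendsto_div_of_isLittleO {α : Type*} {l : Filter α} {a b : α → ℝ} {μ : ℝ}
    (h : (fun t => b t - μ * a t) =o[l] a) (ha : ∀ᶠ t in l, a t ≠ 0) :
    Tendsto (fun t => b t / a t) l (𝓝 μ) := by
  have hlim : Tendsto (fun t => (b t - μ * a t) / a t + μ) l (𝓝 (0 + μ)) :=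
    h.tendsto_div_nhds_zero.add_const μ
  rw [zero_add] at hlim
  refine hlim.congr' ?_
  filter_upwards [ha] with t ht
  field_simp
  ring

theorem restriction_differentiable_general (f : ℝ → ℝ) (hf : Continuous f) (S : Set (Euc 2))
    (x μ : ℝ)
    (htan : IsTangentPlane 1 S (pt x (f x)) (Submodule.span ℝ {pt 1 μ})) :
    Filter.Tendsto (fun t => (f t - f x) / (t - x))
      (nhdsWithin x ({t : ℝ | pt t (f t) ∈ S} \ {x})) (nhds μ) := by
  have hdet := (htan.isLittleO_det (pt_ne_zero_of_left_ne_zero one_ne_zero μ)).comp_tendsto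
    (tendsto_pt_graph_nhdsWithin hf.continuousAt S)
  simp only [Function.comp_def, pt_sub_pt, pt_apply_zero, pt_apply_one, mul_one] at hdet
  refine tendsto_div_of_isLittleO (isLittleO_of_isLittleO_pt ?_) ?_
  · simpa only [neg_sub, mul_comm μ] using hdet.neg_left
  · filter_upwards [self_mem_nhdsWithin] with t ⟨_, htx⟩
    exact sub_ne_zero.2 htx

theorem restriction_differentiable (f : ℝ → ℝ) (hf : Continuous f) (S : Set (Euc 2))
    (hS : IsSmoothSurface 1 S) (x μ : ℝ) (hx : pt x (f x) ∈ S)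
    (htan : IsTangentPlane 1 S (pt x (f x)) (Submodule.span ℝ {pt 1 μ})) :
    Filter.Tendsto (fun t => (f t - f x) / (t - x))
      (nhdsWithin x ({t : ℝ | pt t (f t) ∈ S} \ {x})) (nhds μ) :=
  restriction_differentiable_general f hf S x μ htan

end
end

section
/- There exists a nonempty perfect (compact, no isolated points) set A ⊆ ℝ and an angle θ ∈ (0, π/4) such that for any two distinct points a, a' ∈ A × A, the line through a and a' does not make angle θ with the horizontal axis. -/
/-!
Take for `A` the numbers `∑ εₙ 10⁻ⁿ` with digits `εₙ ∈ {0, 1}`, and `tan θ = 1/3`. If two digit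
sequences first differ at place `k`, the corresponding points of `A` are `10⁻ᵏ` apart up to the
tail `10⁻ᵏ / 9`, so every nonzero difference of points of `A` has absolute value in
`[8/9, 10/9] * 10⁻ᵏ` for some `k`. Three times such an interval never meets another one, so no
secant of `A × A` has slope `1/3`.
-/

open Set

noncomputable section

namespace Cardinal

variable {c : ℝ} {f g : ℕ → Bool}

theorem continuous_cantorFunction (h1 : 0 ≤ c) (h2 : c < 1) :
    Continuous (cantorFunction c) := by
  refine continuous_tsum (fun n => ?_) (summable_geometric_of_lt_one h1 h2) (fun n f => ?_)
  · exact (continuous_of_discreteTopology (f := fun b : Bool => cond b (c ^ n) 0)).comp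
      (continuous_apply n)
  · cases hf : f n <;> simp [cantorFunctionAux, hf, abs_of_nonneg h1, pow_nonneg h1]

theorem cantorFunction_nonneg (h : 0 ≤ c) : 0 ≤ cantorFunction c f :=
  tsum_nonneg fun _ => cantorFunctionAux_nonneg h

theorem cantorFunction_le_inv_one_sub (h1 : 0 ≤ c) (h2 : c < 1) :
    cantorFunction c f ≤ (1 - c)⁻¹ := by
  have htop : cantorFunction c (fun _ => true) = (1 - c)⁻¹ := by
    simp only [cantorFunction, cantorFunctionAux, cond_true]
    exact tsum_geometric_of_lt_one h1 h2
  exact htop ▸ cantorFunction_le h1 h2 fun _ _ => rfl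

theorem abs_cantorFunction_sub_le (h1 : 0 ≤ c) (h2 : c < 1) :
    |cantorFunction c f - cantorFunction c g| ≤ (1 - c)⁻¹ :=
  sub_zero (1 - c)⁻¹ ▸
    abs_sub_le_of_le_of_le (cantorFunction_nonneg h1) (cantorFunction_le_inv_one_sub h1 h2)
      (cantorFunction_nonneg h1) (cantorFunction_le_inv_one_sub h1 h2)

/-- If `f` and `g` first differ at `k`, the difference of their images is `± c ^ k` up to the tail
`∑ n > k, c ^ n = c ^ (k + 1) / (1 - c)`. -/
theorem abs_cantorFunction_sub_mem_Icc (h1 : 0 ≤ c) (h2 : c < 1) {k : ℕ}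
    (hk : ∀ i < k, f i = g i) (hfg : f k ≠ g k) :
    |cantorFunction c f - cantorFunction c g| ∈
      Icc (c ^ k * (1 - 2 * c) / (1 - c)) (c ^ k / (1 - c)) := by
  induction k generalizing f g with
  | zero =>
    set D := cantorFunction c (fun n => f (n + 1)) - cantorFunction c (fun n => g (n + 1))
    set s : ℝ := cond (f 0) 1 0 - cond (g 0) 1 0
    have hsplit : cantorFunction c f - cantorFunction c g = s + c * D := by
      rw [cantorFunction_succ f h1 h2, cantorFunction_succ g h1 h2]
      ring
    have hs : |s| = 1 := by
      cases hf : f 0 <;> cases hg : g 0 <;> simp_all [s]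
    have hcD : |c * D| ≤ c / (1 - c) := by
      rw [abs_mul, abs_of_nonneg h1, div_eq_mul_inv]
      exact mul_le_mul_of_nonneg_left (abs_cantorFunction_sub_le h1 h2) h1
    have hc : 0 < 1 - c := sub_pos.2 h2
    rw [hsplit, pow_zero, one_mul]
    constructor
    · calc (1 - 2 * c) / (1 - c) = 1 - c / (1 - c) := by field_simp; ring
        _ ≤ |s| - |c * D| := by linarith
        _ ≤ |s + c * D| := abs_sub_abs_le_abs_add s (c * D)
    · calc |s + c * D| ≤ |s| + |c * D| := abs_add_le s (c * D)
        _ ≤ 1 + c / (1 - c) := by linarith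
        _ = 1 / (1 - c) := by field_simp; ring
  | succ k ih =>
    have hshift := ih (f := fun n => f (n + 1)) (g := fun n => g (n + 1))
      (fun i hi => hk (i + 1) (by omega)) hfg
    rw [cantorFunction_succ f h1 h2, cantorFunction_succ g h1 h2, hk 0 k.succ_pos, ← sub_sub,
      add_sub_cancel_left, ← mul_sub, abs_mul, abs_of_nonneg h1, pow_succ']
    constructor
    · rw [mul_assoc, mul_div_assoc]
      exact mul_le_mul_of_nonneg_left hshift.1 h1
    · rw [mul_div_assoc]
      exact mul_le_mul_of_nonneg_left hshift.2 h1

theorem exists_abs_cantorFunction_sub_mem_Icc (h1 : 0 ≤ c) (h2 : c < 1) (hfg : f ≠ g) :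
    ∃ k : ℕ, |cantorFunction c f - cantorFunction c g| ∈
      Icc (c ^ k * (1 - 2 * c) / (1 - c)) (c ^ k / (1 - c)) := by
  classical
  have hex : ∃ n, f n ≠ g n := Function.ne_iff.mp hfg
  exact ⟨Nat.find hex, abs_cantorFunction_sub_mem_Icc h1 h2
    (fun i hi => not_not.1 (Nat.find_min hex hi)) (Nat.find_spec hex)⟩

theorem perfect_range_cantorFunction (h1 : 0 < c) (h2 : c < 1 / 2) :
    Perfect (range (cantorFunction c)) := by
  have hc1 : c < 1 := h2.trans (by norm_num)
  refine ⟨(isCompact_range (continuous_cantorFunction h1.le hc1)).isClosed, ?_⟩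
  rintro _ ⟨f, rfl⟩
  rw [accPt_iff_nhds]
  intro U hU
  obtain ⟨ε, hε, hball⟩ := Metric.mem_nhds_iff.mp hU
  obtain ⟨n, hn⟩ := exists_pow_lt_of_lt_one (mul_pos hε (sub_pos.2 hc1)) hc1
  let f' := Function.update f n (!f n)
  have hfn : f' n ≠ f n := by simp [f']
  have hclose := (abs_cantorFunction_sub_mem_Icc h1.le hc1
    (fun i hi => Function.update_of_ne hi.ne _ _) hfn).2
  refine ⟨cantorFunction c f', ⟨hball ?_, mem_range_self f'⟩,
    (cantorFunction_injective h1 h2).ne fun h => hfn (congrFun h n)⟩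
  rw [Metric.mem_ball, Real.dist_eq]
  exact hclose.trans_lt ((div_lt_iff₀ (sub_pos.2 hc1)).2 hn)

end Cardinal

open Cardinal

theorem sub_ne_three_mul_sub {x x' y y' : ℝ} (hx : x ∈ range (cantorFunction (1 / 10)))
    (hx' : x' ∈ range (cantorFunction (1 / 10))) (hy : y ∈ range (cantorFunction (1 / 10)))
    (hy' : y' ∈ range (cantorFunction (1 / 10))) (hxx : x ≠ x') :
    x - x' ≠ 3 * (y - y') := by
  obtain ⟨a, rfl⟩ := hx
  obtain ⟨a', rfl⟩ := hx'
  obtain ⟨b, rfl⟩ := hy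
  obtain ⟨b', rfl⟩ := hy'
  intro h
  have hab : a ≠ a' := by rintro rfl; exact hxx rfl
  have hbb : b ≠ b' := by rintro rfl; exact sub_ne_zero.2 hxx (by rw [h, sub_self, mul_zero])
  obtain ⟨k, hk⟩ := exists_abs_cantorFunction_sub_mem_Icc (c := 1 / 10) (by norm_num)
    (by norm_num) hab
  obtain ⟨j, hj⟩ := exists_abs_cantorFunction_sub_mem_Icc (c := 1 / 10) (by norm_num)
    (by norm_num) hbb
  rw [h, abs_mul, abs_of_pos three_pos] at hk
  norm_num at hk hj
  -- `|x - x'| ∈ [8/9, 10/9] * 10⁻ᵏ` and `3 |y - y'| ∈ [8/3, 10/3] * 10⁻ʲ` never meet.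
  have hpos : (0 : ℝ) < (1 / 10) ^ k := by positivity
  rcases le_or_gt j k with hjk | hkj
  · have : ((1 : ℝ) / 10) ^ k ≤ (1 / 10) ^ j :=
      pow_le_pow_of_le_one (by norm_num) (by norm_num) hjk
    nlinarith
  · have : ((1 : ℝ) / 10) ^ j ≤ (1 / 10) ^ (k + 1) :=
      pow_le_pow_of_le_one (by norm_num) (by norm_num) hkj
    rw [pow_succ] at this
    nlinarith

theorem exists_perfect_no_theta_secant :
    ∃ (A : Set ℝ) (θ : ℝ), A.Nonempty ∧ IsCompact A ∧ Perfect A ∧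
      θ ∈ Set.Ioo 0 (Real.pi / 4) ∧
      ∀ p ∈ A ×ˢ A, ∀ q ∈ A ×ˢ A, p ≠ q → q.2 - p.2 ≠ (q.1 - p.1) * Real.tan θ := by
  refine ⟨range (cantorFunction (1 / 10)), Real.arctan (1 / 3), range_nonempty _,
    isCompact_range (continuous_cantorFunction (by norm_num) (by norm_num)),
    perfect_range_cantorFunction (by norm_num) (by norm_num), ⟨?_, ?_⟩, ?_⟩
  · exact Real.arctan_pos.2 (by norm_num)
  · rw [← Real.arctan_one]
    exact Real.arctan_strictMono (by norm_num)
  rintro ⟨x, y⟩ ⟨hx, hy⟩ ⟨x', y'⟩ ⟨hx', hy'⟩ hne hslope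
  rw [Real.tan_arctan] at hslope
  by_cases hxx : x' = x
  · subst hxx
    exact hne (Prod.ext rfl (by linarith))
  · exact sub_ne_three_mul_sub hx' hx hy' hy hxx (by linarith)

end
end
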